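/- Let Ω ⊆ ℂ be an open set and let f be holomorphic on Ω with f'(z) ≠ 0 for all z ∈ Ω (f locally univalent). Define u : Ω → ℝ by u(z) = log( 8|f'(z)|² / (1 + |f(z)|²)² ). Then u is smooth on Ω and satisfies the Liouville equation Δu + e^u = 0 on Ω, where Δu = ∂²u/∂x² + ∂²u/∂y² is the Laplacian with respect to the real coordinates z = x + iy. -/

import Mathlib

/-!
Write `u = log 8 + log (0 + |f'|²) - 2 log (1 + |f|²)`. For holomorphic `g` and a real constant
`c`, a computation along the two coordinate lines gives
`Δ log (c + |g|²) = 4 c |g'|² / (c + |g|²)²`: the second derivative of `log (c + |g|²)` along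
`t ↦ z + t v` involves `v²`, and those terms cancel between `v = 1` and `v = i`. With `c = 0`
this says that `log |f'|²` is harmonic, and with `c = 1` the remaining term is
`-8 |f'|² / (1 + |f|²)² = -e^u`.
-/

/-- The Laplacian `Δu = ∂²u/∂x² + ∂²u/∂y²` of a function `u : ℂ → ℝ`, computed as the sum
of the second derivatives along the two real coordinate directions `1` and `i`. -/
noncomputable def laplacian (u : ℂ → ℝ) (z : ℂ) : ℝ :=
  deriv (deriv (fun x : ℝ => u (z + x))) 0 +
    deriv (deriv (fun y : ℝ => u (z + y * Complex.I))) 0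

open Complex Filter Topology
open scoped Laplacian InnerProductSpace

theorem ContDiffAt.deriv_deriv_comp_add_smul {E F : Type*} [NormedAddCommGroup E]
    [NormedSpace ℝ E] [NormedAddCommGroup F] [NormedSpace ℝ F] {u : E → F} {z : E}
    (hu : ContDiffAt ℝ 2 u z) (v : E) :
    deriv (deriv fun t : ℝ => u (z + t • v)) 0 = iteratedFDeriv ℝ 2 u z ![v, v] := by
  have hline : Tendsto (fun t : ℝ => z + t • v) (𝓝 0) (𝓝 z) := by
    have : Continuous fun t : ℝ => z + t • v := by fun_prop
    simpa using this.tendsto 0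
  have hfirst : deriv (fun t : ℝ => u (z + t • v)) =ᶠ[𝓝 0]
      fun t => iteratedFDeriv ℝ 1 u (z + t • v) (fun _ => v) := by
    filter_upwards [hline.eventually (hu.eventually (by simp))] with t ht
    rw [(ht.differentiableAt (by simp)).deriv_comp_add_smul]
    simp
  have hsecond := ContDiffAt.deriv_fderiv_add_smul (n := 1) (t := (0 : ℝ)) (x := z) (y := v)
    (by norm_num; simpa using hu)
  rw [hfirst.deriv_eq, hsecond, zero_smul, add_zero]
  congr 1
  ext i
  fin_cases i <;> rfl

theorem ContDiffAt.laplacian_eq {u : ℂ → ℝ} {z : ℂ} (hu : ContDiffAt ℝ 2 u z) :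
    laplacian u z = Δ u z := by
  simp only [InnerProductSpace.laplacian_eq_iteratedFDeriv_complexPlane, laplacian,
    ← hu.deriv_deriv_comp_add_smul, Complex.real_smul, mul_one]

theorem hasDerivAt_deriv_log_add_sq_norm {E : Type*} [NormedAddCommGroup E]
    [InnerProductSpace ℝ E] {γ γ' : ℝ → E} {γ'' : E} {c t : ℝ}
    (hγ : ∀ᶠ s in 𝓝 t, HasDerivAt γ (γ' s) s) (hγ' : HasDerivAt γ' γ'' t)
    (hc : c + ‖γ t‖ ^ 2 ≠ 0) :
    HasDerivAt (deriv fun s => Real.log (c + ‖γ s‖ ^ 2))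
      ((2 * (‖γ' t‖ ^ 2 + ⟪γ t, γ''⟫_ℝ) * (c + ‖γ t‖ ^ 2) - (2 * ⟪γ t, γ' t⟫_ℝ) ^ 2) /
        (c + ‖γ t‖ ^ 2) ^ 2) t := by
  have hne : ∀ᶠ s in 𝓝 t, c + ‖γ s‖ ^ 2 ≠ 0 :=
    (continuousAt_const.add (hγ.self_of_nhds.continuousAt.norm.pow 2)).eventually_ne hc
  have hfirst : deriv (fun s => Real.log (c + ‖γ s‖ ^ 2)) =ᶠ[𝓝 t]
      fun s => 2 * ⟪γ s, γ' s⟫_ℝ / (c + ‖γ s‖ ^ 2) := by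
    filter_upwards [hγ, hne] with s hs hs'
    exact ((hs.norm_sq.const_add c).log hs').deriv
  have hnum := (hγ.self_of_nhds.inner ℝ hγ').const_mul 2
  have hden := hγ.self_of_nhds.norm_sq.const_add c
  refine ((hnum.div hden hc).congr_of_eventuallyEq hfirst).congr_deriv ?_
  rw [real_inner_self_eq_norm_sq]
  ring

theorem HasDerivAt.comp_add_ofReal_mul {g : ℂ → ℂ} {g' z v : ℂ} {t : ℝ}
    (hg : HasDerivAt g g' (z + t * v)) :
    HasDerivAt (fun s : ℝ => g (z + s * v)) (v * g') t := by
  have hline : HasDerivAt (fun s : ℝ => z + s * v) v t := by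
    simpa using ((hasDerivAt_id (t : ℂ)).comp_ofReal.mul_const v).const_add z
  exact hg.scomp t hline

section LogAddSqNorm

variable {g : ℂ → ℂ} {z : ℂ} {c : ℝ}

theorem AnalyticAt.contDiffAt_log_add_sq_norm {n : WithTop ℕ∞} (hg : AnalyticAt ℂ g z)
    (hc : c + ‖g z‖ ^ 2 ≠ 0) : ContDiffAt ℝ n (fun w => Real.log (c + ‖g w‖ ^ 2)) z :=
  (contDiffAt_const.add ((contDiff_norm_sq ℝ).contDiffAt.comp z
    (hg.contDiffAt.restrict_scalars ℝ))).log hc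

theorem AnalyticAt.deriv_deriv_log_add_sq_norm_comp_line (hg : AnalyticAt ℂ g z)
    (hc : c + ‖g z‖ ^ 2 ≠ 0) (v : ℂ) :
    deriv (deriv fun t : ℝ => Real.log (c + ‖g (z + t * v)‖ ^ 2)) 0 =
      (2 * (‖v * deriv g z‖ ^ 2 + ⟪g z, v * (v * deriv (deriv g) z)⟫_ℝ) * (c + ‖g z‖ ^ 2)
        - (2 * ⟪g z, v * deriv g z⟫_ℝ) ^ 2) / (c + ‖g z‖ ^ 2) ^ 2 := by
  have hline : Tendsto (fun t : ℝ => z + t * v) (𝓝 0) (𝓝 z) := by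
    have : Continuous fun t : ℝ => z + t * v := by fun_prop
    simpa using this.tendsto 0
  have hγ : ∀ᶠ t : ℝ in 𝓝 0, HasDerivAt (fun s : ℝ => g (z + s * v))
      (v * deriv g (z + t * v)) t := by
    filter_upwards [hline.eventually hg.eventually_analyticAt] with t ht
    exact ht.differentiableAt.hasDerivAt.comp_add_ofReal_mul
  have hγ' : HasDerivAt (fun s : ℝ => v * deriv g (z + s * v))
      (v * (v * deriv (deriv g) z)) 0 := by
    refine (HasDerivAt.comp_add_ofReal_mul ?_).const_mul v
    simpa using hg.deriv.differentiableAt.hasDerivAt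
  simpa using (hasDerivAt_deriv_log_add_sq_norm hγ hγ' (by simpa using hc)).deriv

theorem AnalyticAt.laplacian_log_add_sq_norm (hg : AnalyticAt ℂ g z) (hc : c + ‖g z‖ ^ 2 ≠ 0) :
    Δ (fun w => Real.log (c + ‖g w‖ ^ 2)) z = 4 * c * ‖deriv g z‖ ^ 2 / (c + ‖g z‖ ^ 2) ^ 2 := by
  rw [← (hg.contDiffAt_log_add_sq_norm hc).laplacian_eq, laplacian]
  have h1 := hg.deriv_deriv_log_add_sq_norm_comp_line hc 1
  have hI := hg.deriv_deriv_log_add_sq_norm_comp_line hc I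
  simp only [mul_one, one_mul] at h1
  rw [h1, hI]
  simp only [Complex.sq_norm, Complex.inner, Complex.normSq_apply, Complex.mul_re,
    Complex.mul_im, Complex.conj_re, Complex.conj_im, Complex.I_re, Complex.I_im] at hc ⊢
  field_simp
  ring

end LogAddSqNorm

noncomputable def liouvilleSolution (f : ℂ → ℂ) (z : ℂ) : ℝ :=
  Real.log (8 * ‖deriv f z‖ ^ 2 / (1 + ‖f z‖ ^ 2) ^ 2)

section LiouvilleSolution

variable {f : ℂ → ℂ} {z : ℂ}

theorem AnalyticAt.liouvilleSolution_eventuallyEq (hf : AnalyticAt ℂ f z) (hf' : deriv f z ≠ 0) :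
    liouvilleSolution f =ᶠ[𝓝 z] (fun _ => Real.log 8) + (fun w => Real.log (0 + ‖deriv f w‖ ^ 2))
      - (2 : ℝ) • fun w => Real.log (1 + ‖f w‖ ^ 2) := by
  filter_upwards [hf.deriv.continuousAt.eventually_ne hf'] with w hw
  simp only [liouvilleSolution, Pi.add_apply, Pi.sub_apply, Pi.smul_apply, smul_eq_mul, zero_add]
  rw [Real.log_div (by positivity) (by positivity), Real.log_mul (by norm_num) (by positivity),
    Real.log_pow (1 + ‖f w‖ ^ 2) 2]
  push_cast
  ring

theorem AnalyticAt.contDiffAt_liouvilleSolution {n : WithTop ℕ∞} (hf : AnalyticAt ℂ f z)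
    (hf' : deriv f z ≠ 0) : ContDiffAt ℝ n (liouvilleSolution f) z :=
  ((contDiffAt_const.add (hf.deriv.contDiffAt_log_add_sq_norm (by simpa using hf'))).sub
    ((hf.contDiffAt_log_add_sq_norm (by positivity)).const_smul (2 : ℝ))).congr_of_eventuallyEq
    (hf.liouvilleSolution_eventuallyEq hf')

theorem AnalyticAt.laplacian_liouvilleSolution_add_exp (hf : AnalyticAt ℂ f z)
    (hf' : deriv f z ≠ 0) : Δ (liouvilleSolution f) z + Real.exp (liouvilleSolution f z) = 0 := by
  have h₀ : 0 + ‖deriv f z‖ ^ 2 ≠ 0 := by simpa using hf'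
  have h₁ : 1 + ‖f z‖ ^ 2 ≠ 0 := by positivity
  set φ₀ := fun w => Real.log (0 + ‖deriv f w‖ ^ 2)
  set φ₁ := fun w => Real.log (1 + ‖f w‖ ^ 2)
  have hφ₀ : ContDiffAt ℝ 2 φ₀ z := hf.deriv.contDiffAt_log_add_sq_norm h₀
  have hφ₁ : ContDiffAt ℝ 2 φ₁ z := hf.contDiffAt_log_add_sq_norm h₁
  rw [(InnerProductSpace.laplacian_congr_nhds (hf.liouvilleSolution_eventuallyEq hf')).eq_of_nhds,
    ContDiffAt.laplacian_sub (f₁ := (fun _ => Real.log 8) + φ₀) (f₂ := (2 : ℝ) • φ₁)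
      (contDiffAt_const.add hφ₀) (hφ₁.const_smul (2 : ℝ)),
    ContDiffAt.laplacian_add contDiffAt_const hφ₀, InnerProductSpace.laplacian_smul _ hφ₁,
    InnerProductSpace.laplacian_const, hf.deriv.laplacian_log_add_sq_norm h₀,
    hf.laplacian_log_add_sq_norm h₁, liouvilleSolution, Real.exp_log (by positivity)]
  simp only [Pi.zero_apply, smul_eq_mul]
  field_simp
  ring

end LiouvilleSolution

/-- **Liouville's formula.** If `f` is holomorphic and locally univalent on an open set
`Ω`, then `u = log(8|f'|²/(1+|f|²)²)` is smooth and solves `Δu + e^u = 0` on `Ω`. -/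
theorem liouville_equation (Ω : Set ℂ) (hΩ : IsOpen Ω) (f : ℂ → ℂ)
    (hf : DifferentiableOn ℂ f Ω) (hf' : ∀ z ∈ Ω, deriv f z ≠ 0)
    (u : ℂ → ℝ)
    (hu : ∀ z ∈ Ω, u z =
      Real.log (8 * ‖deriv f z‖ ^ 2 / (1 + ‖f z‖ ^ 2) ^ 2)) :
    ContDiffOn ℝ (⊤ : ℕ∞) u Ω ∧
      ∀ z ∈ Ω, laplacian u z + Real.exp (u z) = 0 := by
  have hfa : AnalyticOnNhd ℂ f Ω := hf.analyticOnNhd hΩ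
  have hloc : ∀ z ∈ Ω, u =ᶠ[𝓝 z] liouvilleSolution f := fun z hz =>
    eventuallyEq_of_mem (hΩ.mem_nhds hz) hu
  have hsmooth : ∀ z ∈ Ω, ∀ n : WithTop ℕ∞, ContDiffAt ℝ n u z := fun z hz _ =>
    ((hfa z hz).contDiffAt_liouvilleSolution (hf' z hz)).congr_of_eventuallyEq (hloc z hz)
  refine ⟨fun z hz => (hsmooth z hz _).contDiffWithinAt, fun z hz => ?_⟩
  rw [(hsmooth z hz 2).laplacian_eq,
    (InnerProductSpace.laplacian_congr_nhds (hloc z hz)).eq_of_nhds, (hloc z hz).eq_of_nhds]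
  exact (hfa z hz).laplacian_liouvilleSolution_add_exp (hf' z hz)
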